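/- Consider the multilayer NODE system in which, for each layer i+1, the scalar activation φ^{i+1} is incrementally sector bounded by [α^{i+1}, β^{i+1}] on ℝ. Suppose there exist a symmetric positive definite P ∈ ℝ^{n×n} and constants 0 < p̲ ≤ p̄ and μ > 0 with p̲·I ⪯ P ⪯ p̄·I such that for all vectors u ∈ ℝⁿ, v⁰ ∈ ℝⁿ and vⁱ ∈ ℝ^{mᵢ}, i = 1,…,k: −μ·‖u‖² + 2·⟨u, P·v⁰⟩ + ⟨v⁰, (AᵀP + PA)·v⁰⟩ + 2·⟨v⁰, P·W^{k+1}·vᵏ⟩ − 2·Σ_{i=0}^{k−1} ⟨v^{i+1} − α^{i+1}·W^{i+1}·vⁱ, v^{i+1} − β^{i+1}·W^{i+1}·vⁱ⟩ ≤ 0. Then any two solutions x₁, x₂ of the multilayer NODE system satisfy ‖x₁(t) − x₂(t)‖ ≤ √(p̄/p̲) · e^{−(p̲/(2μ))·t} · ‖x₁(0) − x₂(0)‖ for all t ≥ 0. -/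

import Mathlib

open Matrix

/-- The Euclidean norm of a vector in `ℝⁿ`. -/
noncomputable def eNorm {n : ℕ} (v : Fin n → ℝ) : ℝ := Real.sqrt (v ⬝ᵥ v)

/-- Layer maps of a feedforward neural network whose layer `i+1` applies the scalar
activation `φ i` componentwise. -/
noncomputable def nnLayer (m : ℕ → ℕ)
    (W : (i : ℕ) → Matrix (Fin (m (i + 1))) (Fin (m i)) ℝ)
    (b : (i : ℕ) → Fin (m (i + 1)) → ℝ)
    (φ : ℕ → ℝ → ℝ) :
    (i : ℕ) → (Fin (m 0) → ℝ) → Fin (m i) → ℝ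
  | 0, x => x
  | i + 1, x => fun j => φ i ((W i).mulVec (nnLayer m W b φ i x) j + b i j)


/-! The difference `e = x₁ - x₂` of two solutions solves `ė = A e + W^{k+1} Δᵏ`, where
`Δⁱ = wⁱ(x₁) - wⁱ(x₂)` are the layer differences; the incremental sector bounds make every
term `⟨Δⁱ⁺¹ - αⁱ⁺¹ Wⁱ⁺¹ Δⁱ, Δⁱ⁺¹ - βⁱ⁺¹ Wⁱ⁺¹ Δⁱ⟩` nonpositive. Evaluating the LMI at
`u = (p̲/μ) e`, `v = Δ` and using `p̲ ‖e‖² ≤ eᵀ P e` gives `d/dt (eᵀ P e) ≤ -(p̲/μ) eᵀ P e`.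
Grönwall's inequality makes `eᵀ P e` decay like `exp (-(p̲/μ) t)`, and the sandwich
`p̲ ‖e‖² ≤ eᵀ P e ≤ p̄ ‖e‖²` turns this into the bound on `‖e‖`. -/

theorem HasDerivAt.dotProduct {ι : Type*} [Fintype ι] {f g : ℝ → ι → ℝ} {f' g' : ι → ℝ}
    {t : ℝ} (hf : HasDerivAt f f' t) (hg : HasDerivAt g g' t) :
    HasDerivAt (fun s => f s ⬝ᵥ g s) (f' ⬝ᵥ g t + f t ⬝ᵥ g') t := by
  unfold _root_.dotProduct
  rw [← Finset.sum_add_distrib]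
  exact HasDerivAt.fun_sum fun i _ => (hasDerivAt_pi.mp hf i).mul (hasDerivAt_pi.mp hg i)

theorem HasDerivAt.matrix_mulVec {ι κ : Type*} [Fintype κ] (M : Matrix ι κ ℝ) {f : ℝ → κ → ℝ}
    {f' : κ → ℝ} {t : ℝ} (hf : HasDerivAt f f' t) :
    HasDerivAt (fun s => M *ᵥ f s) (M *ᵥ f') t :=
  hasDerivAt_pi.mpr fun i =>
    HasDerivAt.fun_sum fun j _ => (hasDerivAt_pi.mp hf j).const_mul (M i j)

theorem hasDerivAt_dotProduct_mulVec_self {ι : Type*} [Fintype ι] {A P : Matrix ι ι ℝ}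
    (hP : P.IsSymm) {e : ℝ → ι → ℝ} {w : ι → ℝ} {t : ℝ} (he : HasDerivAt e (A *ᵥ e t + w) t) :
    HasDerivAt (fun s => e s ⬝ᵥ P *ᵥ e s)
      (e t ⬝ᵥ (Aᵀ * P + P * A) *ᵥ e t + 2 * (e t ⬝ᵥ P *ᵥ w)) t := by
  convert he.dotProduct (he.matrix_mulVec P) using 1
  have hsymm : w ⬝ᵥ P *ᵥ e t = e t ⬝ᵥ P *ᵥ w := by
    rw [← dotProduct_transpose_mulVec, hP.eq]
  rw [add_dotProduct, mulVec_add, dotProduct_add, hsymm, add_mulVec, dotProduct_add,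
    ← mulVec_mulVec, ← mulVec_mulVec, dotProduct_transpose_mulVec, dotProduct_comm (P *ᵥ e t)]
  ring

theorem le_mul_exp_of_hasDerivAt_le_neg_mul {f f' : ℝ → ℝ} {c t : ℝ}
    (hf : ∀ s, 0 ≤ s → HasDerivAt f (f' s) s) (hbound : ∀ s, 0 ≤ s → f' s ≤ -c * f s)
    (ht : 0 ≤ t) : f t ≤ f 0 * Real.exp (-c * t) := by
  have := le_gronwallBound_of_liminf_deriv_right_le (f' := f') (K := -c) (ε := 0)
    (fun s hs => (hf s hs.1).continuousAt.continuousWithinAt)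
    (fun s hs _ hr => (hf s hs.1).hasDerivWithinAt.liminf_right_slope_le hr)
    le_rfl (fun s hs => by simpa using hbound s hs.1) t ⟨ht, le_rfl⟩
  simpa [gronwallBound_ε0] using this

theorem Matrix.PosSemidef.mul_dotProduct_self_le {ι : Type*} [Fintype ι] [DecidableEq ι]
    {P : Matrix ι ι ℝ} {p : ℝ} (h : (P - p • 1).PosSemidef) (x : ι → ℝ) :
    p * (x ⬝ᵥ x) ≤ x ⬝ᵥ P *ᵥ x := by
  simpa [sub_mulVec, smul_mulVec, dotProduct_sub, sub_nonneg] using h.dotProduct_mulVec_nonneg x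

theorem Matrix.PosSemidef.dotProduct_mulVec_le {ι : Type*} [Fintype ι] [DecidableEq ι]
    {P : Matrix ι ι ℝ} {p : ℝ} (h : (p • 1 - P).PosSemidef) (x : ι → ℝ) :
    x ⬝ᵥ P *ᵥ x ≤ p * (x ⬝ᵥ x) := by
  simpa [sub_mulVec, smul_mulVec, dotProduct_sub, sub_nonneg] using h.dotProduct_mulVec_nonneg x

theorem dotProduct_self_le_of_dotProduct_mulVec_le {ι : Type*} [Fintype ι] [DecidableEq ι]
    {P : Matrix ι ι ℝ} {p₁ p₂ r : ℝ} (hp₁ : 0 < p₁) (hr : 0 ≤ r)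
    (hPlo : (P - p₁ • 1).PosSemidef) (hPhi : (p₂ • 1 - P).PosSemidef) {x y : ι → ℝ}
    (h : x ⬝ᵥ P *ᵥ x ≤ y ⬝ᵥ P *ᵥ y * r) :
    x ⬝ᵥ x ≤ p₂ / p₁ * r * (y ⬝ᵥ y) := by
  have hlo := hPlo.mul_dotProduct_self_le x
  have hhi := mul_le_mul_of_nonneg_right (hPhi.dotProduct_mulVec_le y) hr
  rw [div_mul_eq_mul_div, div_mul_eq_mul_div, le_div_iff₀ hp₁]
  linarith

theorem eNorm_le_sqrt_mul {n : ℕ} {x y : Fin n → ℝ} {a : ℝ} (h : x ⬝ᵥ x ≤ a * (y ⬝ᵥ y)) :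
    eNorm x ≤ Real.sqrt a * eNorm y := by
  have hy : 0 ≤ y ⬝ᵥ y := Finset.sum_nonneg fun i _ => mul_self_nonneg (y i)
  rw [eNorm, eNorm, ← Real.sqrt_mul' _ hy]
  exact Real.sqrt_le_sqrt h

def IncrSectorBounded (φ : ℝ → ℝ) (α β : ℝ) : Prop :=
  ∀ a c : ℝ, (φ a - φ c - α * (a - c)) * (φ a - φ c - β * (a - c)) ≤ 0

theorem IncrSectorBounded.dotProduct_nonpos {φ : ℝ → ℝ} {α β : ℝ} (h : IncrSectorBounded φ α β)
    {ι : Type*} [Fintype ι] (z z' : ι → ℝ) :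
    (φ ∘ z - φ ∘ z' - α • (z - z')) ⬝ᵥ (φ ∘ z - φ ∘ z' - β • (z - z')) ≤ 0 :=
  Finset.sum_nonpos fun j _ => h (z j) (z' j)

section Network

variable {m : ℕ → ℕ} {W : (i : ℕ) → Matrix (Fin (m (i + 1))) (Fin (m i)) ℝ}
  {φ : ℕ → ℝ → ℝ} {α β : ℕ → ℝ}

theorem IncrSectorBounded.nnLayer_succ (hφ : ∀ i, IncrSectorBounded (φ i) (α i) (β i))
    (b : (i : ℕ) → Fin (m (i + 1)) → ℝ) (x y : Fin (m 0) → ℝ) (i : ℕ) :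
    (nnLayer m W b φ (i + 1) x - nnLayer m W b φ (i + 1) y
        - α i • W i *ᵥ (nnLayer m W b φ i x - nnLayer m W b φ i y)) ⬝ᵥ
      (nnLayer m W b φ (i + 1) x - nnLayer m W b φ (i + 1) y
        - β i • W i *ᵥ (nnLayer m W b φ i x - nnLayer m W b φ i y)) ≤ 0 := by
  rw [mulVec_sub, ← add_sub_add_right_eq_sub (W i *ᵥ _) _ (b i)]
  exact (hφ i).dotProduct_nonpos _ _

theorem lyapunov_deriv_le_of_LMI {k : ℕ} {A P : Matrix (Fin (m 0)) (Fin (m 0)) ℝ}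
    {Wk : Matrix (Fin (m 0)) (Fin (m k)) ℝ} {p₁ μ : ℝ} (hμ : 0 < μ) (hp₁ : 0 < p₁)
    (hPlo : (P - p₁ • (1 : Matrix (Fin (m 0)) (Fin (m 0)) ℝ)).PosSemidef)
    (hQF : ∀ (u : Fin (m 0) → ℝ) (v : (i : ℕ) → Fin (m i) → ℝ),
      -μ * (u ⬝ᵥ u) + 2 * (u ⬝ᵥ P *ᵥ v 0)
        + v 0 ⬝ᵥ (Aᵀ * P + P * A) *ᵥ v 0
        + 2 * (v 0 ⬝ᵥ P *ᵥ (Wk *ᵥ v k))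
        - 2 * ∑ i ∈ Finset.range k,
            (v (i + 1) - α i • W i *ᵥ v i) ⬝ᵥ
              (v (i + 1) - β i • W i *ᵥ v i) ≤ 0)
    (v : (i : ℕ) → Fin (m i) → ℝ)
    (hv : ∀ i, (v (i + 1) - α i • W i *ᵥ v i) ⬝ᵥ (v (i + 1) - β i • W i *ᵥ v i) ≤ 0) :
    v 0 ⬝ᵥ (Aᵀ * P + P * A) *ᵥ v 0 + 2 * (v 0 ⬝ᵥ P *ᵥ (Wk *ᵥ v k))
      ≤ -(p₁ / μ) * (v 0 ⬝ᵥ P *ᵥ v 0) := by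
  set c := p₁ / μ
  have hLMI := hQF (c • v 0) v
  simp only [smul_dotProduct, dotProduct_smul, smul_eq_mul] at hLMI
  have hc : μ * (c * (c * (v 0 ⬝ᵥ v 0))) = c * (p₁ * (v 0 ⬝ᵥ v 0)) := by
    simp only [c]
    field_simp
  have hS := Finset.sum_nonpos fun i (_ : i ∈ Finset.range k) => hv i
  have hPv := mul_le_mul_of_nonneg_left (hPlo.mul_dotProduct_self_le (v 0))
    (by positivity : 0 ≤ c)
  linarith

end Network

theorem multilayer_node_contractive_LMI_general
    (k : ℕ) (m : ℕ → ℕ)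
    (A : Matrix (Fin (m 0)) (Fin (m 0)) ℝ)
    (W : (i : ℕ) → Matrix (Fin (m (i + 1))) (Fin (m i)) ℝ)
    (b : (i : ℕ) → Fin (m (i + 1)) → ℝ)
    (Wk : Matrix (Fin (m 0)) (Fin (m k)) ℝ) (bk : Fin (m 0) → ℝ)
    (φ : ℕ → ℝ → ℝ) (α β : ℕ → ℝ)
    (hsec : ∀ i, ∀ a c : ℝ,
      (φ i a - φ i c - α i * (a - c)) * (φ i a - φ i c - β i * (a - c)) ≤ 0)
    (P : Matrix (Fin (m 0)) (Fin (m 0)) ℝ) (hP : P.PosDef)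
    (p₁ p₂ μ : ℝ) (hp₁ : 0 < p₁) (hμ : 0 < μ)
    (hPlo : (P - p₁ • (1 : Matrix (Fin (m 0)) (Fin (m 0)) ℝ)).PosSemidef)
    (hPhi : (p₂ • (1 : Matrix (Fin (m 0)) (Fin (m 0)) ℝ) - P).PosSemidef)
    (hQF : ∀ (u : Fin (m 0) → ℝ) (v : (i : ℕ) → Fin (m i) → ℝ),
      -μ * (u ⬝ᵥ u) + 2 * (u ⬝ᵥ P.mulVec (v 0))
        + v 0 ⬝ᵥ (Aᵀ * P + P * A).mulVec (v 0)
        + 2 * (v 0 ⬝ᵥ P.mulVec (Wk.mulVec (v k)))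
        - 2 * ∑ i ∈ Finset.range k,
            (v (i + 1) - α i • (W i).mulVec (v i)) ⬝ᵥ
              (v (i + 1) - β i • (W i).mulVec (v i)) ≤ 0)
    (x₁ x₂ : ℝ → Fin (m 0) → ℝ)
    (hx₁ : ∀ t, 0 ≤ t → HasDerivAt x₁
      (A.mulVec (x₁ t) + (Wk.mulVec (nnLayer m W b φ k (x₁ t)) + bk)) t)
    (hx₂ : ∀ t, 0 ≤ t → HasDerivAt x₂
      (A.mulVec (x₂ t) + (Wk.mulVec (nnLayer m W b φ k (x₂ t)) + bk)) t) :
    ∀ t, 0 ≤ t →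
      eNorm (x₁ t - x₂ t) ≤
        Real.sqrt (p₂ / p₁) * Real.exp (-(p₁ / (2 * μ)) * t) * eNorm (x₁ 0 - x₂ 0) := by
  intro t ht
  have hPsymm : P.IsSymm := isHermitian_iff_isSymm.mp hP.isHermitian
  set Δ : ℝ → (i : ℕ) → Fin (m i) → ℝ :=
    fun s i => nnLayer m W b φ i (x₁ s) - nnLayer m W b φ i (x₂ s)
  set V : ℝ → ℝ := fun s => Δ s 0 ⬝ᵥ P *ᵥ Δ s 0
  have hV : ∀ s, 0 ≤ s → HasDerivAt V
      (Δ s 0 ⬝ᵥ (Aᵀ * P + P * A) *ᵥ Δ s 0 + 2 * (Δ s 0 ⬝ᵥ P *ᵥ (Wk *ᵥ Δ s k))) s := by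
    refine fun s hs => hasDerivAt_dotProduct_mulVec_self hPsymm
      (((hx₁ s hs).sub (hx₂ s hs)).congr_deriv ?_)
    simp only [Δ, nnLayer, mulVec_sub]
    abel
  have hdecay : V t ≤ V 0 * Real.exp (-(p₁ / μ) * t) :=
    le_mul_exp_of_hasDerivAt_le_neg_mul hV
      (fun s _ => lyapunov_deriv_le_of_LMI hμ hp₁ hPlo hQF (Δ s)
        (IncrSectorBounded.nnLayer_succ hsec b (x₁ s) (x₂ s))) ht
  calc eNorm (x₁ t - x₂ t)
      ≤ Real.sqrt (p₂ / p₁ * Real.exp (-(p₁ / μ) * t)) * eNorm (x₁ 0 - x₂ 0) :=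
        eNorm_le_sqrt_mul <| dotProduct_self_le_of_dotProduct_mulVec_le hp₁
          (Real.exp_pos _).le hPlo hPhi hdecay
    _ = _ := by
        rw [Real.sqrt_mul' _ (Real.exp_pos _).le, ← Real.exp_half]
        ring_nf

/-- Theorem 4: contraction of the multilayer NODE system under the
convex (quadratic-form) LMI condition. -/
theorem multilayer_node_contractive_LMI
    (k : ℕ) (hk : 1 ≤ k) (m : ℕ → ℕ)
    (A : Matrix (Fin (m 0)) (Fin (m 0)) ℝ)
    (W : (i : ℕ) → Matrix (Fin (m (i + 1))) (Fin (m i)) ℝ)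
    (b : (i : ℕ) → Fin (m (i + 1)) → ℝ)
    (Wk : Matrix (Fin (m 0)) (Fin (m k)) ℝ) (bk : Fin (m 0) → ℝ)
    (φ : ℕ → ℝ → ℝ) (α β : ℕ → ℝ)
    (hsec : ∀ i, ∀ a c : ℝ,
      (φ i a - φ i c - α i * (a - c)) * (φ i a - φ i c - β i * (a - c)) ≤ 0)
    (P : Matrix (Fin (m 0)) (Fin (m 0)) ℝ) (hP : P.PosDef)
    (p₁ p₂ μ : ℝ) (hp₁ : 0 < p₁) (hp₁₂ : p₁ ≤ p₂) (hμ : 0 < μ)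
    (hPlo : (P - p₁ • (1 : Matrix (Fin (m 0)) (Fin (m 0)) ℝ)).PosSemidef)
    (hPhi : (p₂ • (1 : Matrix (Fin (m 0)) (Fin (m 0)) ℝ) - P).PosSemidef)
    (hQF : ∀ (u : Fin (m 0) → ℝ) (v : (i : ℕ) → Fin (m i) → ℝ),
      -μ * (u ⬝ᵥ u) + 2 * (u ⬝ᵥ P.mulVec (v 0))
        + v 0 ⬝ᵥ (Aᵀ * P + P * A).mulVec (v 0)
        + 2 * (v 0 ⬝ᵥ P.mulVec (Wk.mulVec (v k)))
        - 2 * ∑ i ∈ Finset.range k,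
            (v (i + 1) - α i • (W i).mulVec (v i)) ⬝ᵥ
              (v (i + 1) - β i • (W i).mulVec (v i)) ≤ 0)
    (x₁ x₂ : ℝ → Fin (m 0) → ℝ)
    (hx₁ : ∀ t, 0 ≤ t → HasDerivAt x₁
      (A.mulVec (x₁ t) + (Wk.mulVec (nnLayer m W b φ k (x₁ t)) + bk)) t)
    (hx₂ : ∀ t, 0 ≤ t → HasDerivAt x₂
      (A.mulVec (x₂ t) + (Wk.mulVec (nnLayer m W b φ k (x₂ t)) + bk)) t) :
    ∀ t, 0 ≤ t →
      eNorm (x₁ t - x₂ t) ≤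
        Real.sqrt (p₂ / p₁) * Real.exp (-(p₁ / (2 * μ)) * t) * eNorm (x₁ 0 - x₂ 0) :=
  multilayer_node_contractive_LMI_general k m A W b Wk bk φ α β hsec P hP p₁ p₂ μ hp₁ hμ hPlo hPhi
    hQF x₁ x₂ hx₁ hx₂
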